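/- arXiv:1712.02090 — 2 statements merged into one kernel-verified Lean document; each statement's English description precedes it below -/
import Mathlib

section
/- Suppose A and A' are C*-subalgebras of B(ℓ²) both containing K(ℓ²) (the compact operators). Then every *-isomorphism Φ : A → A' is implemented by a unitary: there is a unitary U ∈ B(ℓ²) such that Φ(A) = U*AU for all A ∈ A. -/
/-!
A rank-one projection `p = rankOne ξ ξ` is, algebraically, a nonzero self-adjoint idempotent
with `p b p ∈ 𝕜 p` for all `b`; since `Φ` preserves this, `Φ p = rankOne η η` for a unit
vector `η`. Then `U x = Φ (rankOne x ξ) η` is isometric because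
`star (rankOne x ξ) * rankOne y ξ = ⟪x, y⟫ • p`, onto because `U (Φ⁻¹ (rankOne y η) ξ) = y`,
and `Φ a * U = U * a` by multiplicativity of `Φ`.
-/

open InnerProductSpace ContinuousLinearMap

section RankOne

variable {𝕜 E : Type*} [RCLike 𝕜] [NormedAddCommGroup E] [InnerProductSpace 𝕜 E]

theorem isCompactOperator_rankOne {F : Type*} [NormedAddCommGroup F] [NormedSpace 𝕜 F]
    (x : F) (y : E) : IsCompactOperator (rankOne 𝕜 x y) :=
  (isCompactOperator_of_locallyCompactSpace_rng (toSpanSingleton 𝕜 x)).comp_clm (innerSL 𝕜 y)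

theorem rankOne_mul_mul_rankOne_self (x : E) (S : E →L[𝕜] E) :
    rankOne 𝕜 x x * S * rankOne 𝕜 x x = ⟪x, S x⟫_𝕜 • rankOne 𝕜 x x := by
  simp only [mul_def, comp_rankOne]
  ext z
  simp

variable [CompleteSpace E]

theorem star_rankOne (x y : E) : star (rankOne 𝕜 x y) = rankOne 𝕜 y x := by
  rw [star_eq_adjoint, adjoint_rankOne]

theorem IsStarProjection.exists_eq_rankOne {q : E →L[𝕜] E} (hq : IsStarProjection q)
    (hq0 : q ≠ 0) (hmin : ∀ x : E, ∃ c : 𝕜, q * rankOne 𝕜 x x * q = c • q) :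
    ∃ η : E, ‖η‖ = 1 ∧ q = rankOne 𝕜 η η := by
  obtain ⟨w, hw⟩ : ∃ w, q w ≠ 0 := by
    by_contra! h
    exact hq0 (ext h)
  set η := (‖q w‖ : 𝕜)⁻¹ • q w
  have hη : ‖η‖ = 1 := norm_smul_inv_norm hw
  have hqη : q η = η := by
    rw [map_smul, ← mul_apply_eq_comp, hq.isIdempotentElem.eq]
  have hqη' : adjoint q η = η := by
    rw [← star_eq_adjoint, hq.isSelfAdjoint.star_eq, hqη]
  obtain ⟨c, hc⟩ := hmin η
  rw [mul_def, mul_def, comp_rankOne, rankOne_comp, hqη, hqη'] at hc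
  have hc1 : c = 1 := by
    have hη0 : η ≠ 0 := norm_ne_zero_iff.mp (hη ▸ one_ne_zero)
    refine smul_left_injective 𝕜 hη0 ?_
    simpa [hqη, hη] using congr($hc η).symm
  exact ⟨η, hη, by rw [hc, hc1, one_smul]⟩

end RankOne

section Spatial

variable {𝕜 H K : Type*} [RCLike 𝕜]
  [NormedAddCommGroup H] [InnerProductSpace 𝕜 H] [CompleteSpace H]
  [NormedAddCommGroup K] [InnerProductSpace 𝕜 K] [CompleteSpace K]
  {A : NonUnitalStarSubalgebra 𝕜 (H →L[𝕜] H)} {B : NonUnitalStarSubalgebra 𝕜 (K →L[𝕜] K)}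
  (hA : ∀ x y : H, rankOne 𝕜 x y ∈ A) (hB : ∀ x y : K, rankOne 𝕜 x y ∈ B) (Φ : A ≃⋆ₐ[𝕜] B)

set_option maxHeartbeats 400000 in
include hB in
theorem StarAlgEquiv.exists_map_eq_rankOne_self {ξ : H} (hξ : ‖ξ‖ = 1) {P : A}
    (hP : (P : H →L[𝕜] H) = rankOne 𝕜 ξ ξ) :
    ∃ η : K, ‖η‖ = 1 ∧ (Φ P : K →L[𝕜] K) = rankOne 𝕜 η η := by
  have hPproj : IsStarProjection P := by
    rw [isStarProjection_iff', ← Subtype.val_inj, ← Subtype.val_inj, MulMemClass.coe_mul,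
      StarMemClass.coe_star, hP]
    exact ⟨(isIdempotentElem_rankOne_self hξ).eq, star_rankOne ξ ξ⟩
  have hP0 : P ≠ 0 := by
    rintro rfl
    have := congr($hP ξ)
    simp only [ZeroMemClass.coe_zero, zero_apply, rankOne_apply, inner_self_eq_norm_sq_to_K, hξ,
      RCLike.ofReal_one, one_pow, one_smul] at this
    exact ne_zero_of_norm_ne_zero (hξ ▸ one_ne_zero) this.symm
  have hmin (b : B) : ∃ c : 𝕜, Φ P * b * Φ P = c • Φ P := by
    refine ⟨⟪ξ, ((Φ.symm b : A) : H →L[𝕜] H) ξ⟫_𝕜, ?_⟩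
    have h : P * Φ.symm b * P = ⟪ξ, ((Φ.symm b : A) : H →L[𝕜] H) ξ⟫_𝕜 • P := by
      apply Subtype.ext
      simp only [MulMemClass.coe_mul, SetLike.val_smul, hP]
      exact rankOne_mul_mul_rankOne_self ξ _
    have := congr(Φ $h)
    rwa [map_mul Φ, map_mul Φ, map_smul Φ, Φ.apply_symm_apply] at this
  have hq := (hPproj.map Φ).map (NonUnitalStarSubalgebraClass.subtype B)
  refine hq.exists_eq_rankOne (by simpa using hP0) fun x ↦ ?_
  obtain ⟨c, hc⟩ := hmin ⟨rankOne 𝕜 x x, hB x x⟩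
  exact ⟨c, congr(($hc : K →L[𝕜] K))⟩

set_option maxHeartbeats 400000 in
/-- When `Φ (rankOne ξ ξ) = rankOne η η` for unit vectors `ξ, η`, this is the isometry
implementing `Φ`. -/
noncomputable def StarAlgEquiv.spatialMap (ξ : H) (η : K) : H →ₗ[𝕜] K where
  toFun x := (Φ ⟨rankOne 𝕜 x ξ, hA x ξ⟩ : K →L[𝕜] K) η
  map_add' x y := by
    have : (⟨rankOne 𝕜 (x + y) ξ, hA _ ξ⟩ : A) =
        ⟨rankOne 𝕜 x ξ, hA x ξ⟩ + ⟨rankOne 𝕜 y ξ, hA y ξ⟩ :=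
      Subtype.ext (by simp only [map_add, add_apply, AddMemClass.mk_add_mk])
    rw [this, map_add, AddMemClass.coe_add, add_apply]
  map_smul' c x := by
    have : (⟨rankOne 𝕜 (c • x) ξ, hA _ ξ⟩ : A) = c • ⟨rankOne 𝕜 x ξ, hA x ξ⟩ :=
      Subtype.ext (by simp only [map_smul, smul_apply, SetLike.mk_smul_mk])
    rw [this, map_smul Φ, SetLike.val_smul, smul_apply, RingHom.id_apply]

theorem StarAlgEquiv.spatialMap_apply (ξ : H) (η : K) (x : H) :
    Φ.spatialMap hA ξ η x = (Φ ⟨rankOne 𝕜 x ξ, hA x ξ⟩ : K →L[𝕜] K) η :=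
  rfl

set_option maxHeartbeats 400000 in
set_option synthInstance.maxHeartbeats 100000 in
theorem StarAlgEquiv.inner_spatialMap {ξ : H} {η : K} (hη : ‖η‖ = 1)
    (hΦ : (Φ ⟨rankOne 𝕜 ξ ξ, hA ξ ξ⟩ : K →L[𝕜] K) = rankOne 𝕜 η η) (x y : H) :
    ⟪Φ.spatialMap hA ξ η x, Φ.spatialMap hA ξ η y⟫_𝕜 = ⟪x, y⟫_𝕜 := by
  have h : star ⟨rankOne 𝕜 x ξ, hA x ξ⟩ * ⟨rankOne 𝕜 y ξ, hA y ξ⟩ =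
      ⟪x, y⟫_𝕜 • (⟨rankOne 𝕜 ξ ξ, hA ξ ξ⟩ : A) := by
    apply Subtype.ext
    simp only [StarMemClass.coe_star, MulMemClass.coe_mul, SetLike.val_smul, star_rankOne,
      mul_def, rankOne_comp_rankOne]
  have hΦh := congr(($(congr(Φ $h)) : K →L[𝕜] K))
  rw [map_mul Φ, map_star Φ, map_smul Φ, MulMemClass.coe_mul, StarMemClass.coe_star,
    SetLike.val_smul, hΦ] at hΦh
  rw [spatialMap_apply, spatialMap_apply, ← adjoint_inner_right, ← star_eq_adjoint,
    ← mul_apply_eq_comp, hΦh]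
  simp [inner_smul_right, hη]

theorem StarAlgEquiv.map_apply_spatialMap (ξ : H) (η : K) (T : A) (x : H) :
    (Φ T : K →L[𝕜] K) (Φ.spatialMap hA ξ η x) = Φ.spatialMap hA ξ η ((T : H →L[𝕜] H) x) := by
  have h : T * ⟨rankOne 𝕜 x ξ, hA x ξ⟩ = ⟨rankOne 𝕜 ((T : H →L[𝕜] H) x) ξ, hA _ ξ⟩ :=
    Subtype.ext (comp_rankOne x ξ (T : H →L[𝕜] H))
  rw [spatialMap_apply, spatialMap_apply, ← mul_apply_eq_comp, ← MulMemClass.coe_mul, ← map_mul,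
    h]

theorem StarAlgEquiv.spatialMap_self {ξ : H} {η : K} (hη : ‖η‖ = 1)
    (hΦ : (Φ ⟨rankOne 𝕜 ξ ξ, hA ξ ξ⟩ : K →L[𝕜] K) = rankOne 𝕜 η η) :
    Φ.spatialMap hA ξ η ξ = η := by
  simp [spatialMap_apply, hΦ, hη]

include hB in
theorem StarAlgEquiv.spatialMap_surjective {ξ : H} {η : K} (hη : ‖η‖ = 1)
    (hΦ : (Φ ⟨rankOne 𝕜 ξ ξ, hA ξ ξ⟩ : K →L[𝕜] K) = rankOne 𝕜 η η) :
    Function.Surjective (Φ.spatialMap hA ξ η) := by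
  intro y
  refine ⟨((Φ.symm ⟨rankOne 𝕜 y η, hB y η⟩ : A) : H →L[𝕜] H) ξ, ?_⟩
  rw [← map_apply_spatialMap, Φ.spatialMap_self hA hη hΦ, Φ.apply_symm_apply]
  simp [hη]

include hA hB in
theorem StarAlgEquiv.exists_conjStarAlgEquiv_eq [Nontrivial H] :
    ∃ e : H ≃ₗᵢ[𝕜] K, ∀ a : A, (Φ a : K →L[𝕜] K) = e.conjStarAlgEquiv a := by
  obtain ⟨v, hv⟩ := exists_ne (0 : H)
  have hξ : ‖(‖v‖ : 𝕜)⁻¹ • v‖ = 1 := norm_smul_inv_norm hv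
  obtain ⟨η, hη, hΦ⟩ := Φ.exists_map_eq_rankOne_self hB hξ (P := ⟨_, hA _ _⟩) rfl
  let e := LinearIsometryEquiv.ofSurjective
    ((Φ.spatialMap hA _ η).isometryOfInner (Φ.inner_spatialMap hA hη hΦ))
    (Φ.spatialMap_surjective hA hB hη hΦ)
  refine ⟨e, fun a ↦ ContinuousLinearMap.ext fun y ↦ ?_⟩
  obtain ⟨x, rfl⟩ := e.surjective y
  rw [LinearIsometryEquiv.conjStarAlgEquiv_apply_apply, e.symm_apply_apply]
  exact Φ.map_apply_spatialMap hA _ η a x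

end Spatial

theorem stmt3_general {H : Type*} [NormedAddCommGroup H] [InnerProductSpace ℂ H] [CompleteSpace H]
    (A A' : NonUnitalStarSubalgebra ℂ (H →L[ℂ] H))
    (hKA : ∀ T : H →L[ℂ] H, IsCompactOperator T → T ∈ A)
    (hKA' : ∀ T : H →L[ℂ] H, IsCompactOperator T → T ∈ A')
    (Φ : A ≃⋆ₐ[ℂ] A') :
    ∃ U : H →L[ℂ] H, U ∈ unitary (H →L[ℂ] H) ∧
      ∀ a : A, (Φ a : H →L[ℂ] H) = star U * (a : H →L[ℂ] H) * U := by
  rcases subsingleton_or_nontrivial H with hH | hH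
  · exact ⟨1, one_mem _, fun a ↦ Subsingleton.elim _ _⟩
  obtain ⟨e, he⟩ := Φ.exists_conjStarAlgEquiv_eq
    (fun x y ↦ hKA _ (isCompactOperator_rankOne x y))
    (fun x y ↦ hKA' _ (isCompactOperator_rankOne x y))
  refine ⟨e.symm, (Unitary.linearIsometryEquiv.symm e.symm).2, fun a ↦ ?_⟩
  rw [he, LinearIsometryEquiv.star_eq_symm, LinearIsometryEquiv.conjStarAlgEquiv_apply]
  rfl

/-- a *-isomorphism between C*-subalgebras of `B(ℓ²)` both containing the
compact operators is implemented by a unitary of `B(ℓ²)`. -/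
theorem stmt3 {H : Type*} [NormedAddCommGroup H] [InnerProductSpace ℂ H] [CompleteSpace H]
    [TopologicalSpace.SeparableSpace H] (hinf : ¬ FiniteDimensional ℂ H)
    (A A' : NonUnitalStarSubalgebra ℂ (H →L[ℂ] H))
    (hAclosed : IsClosed (A : Set (H →L[ℂ] H)))
    (hA'closed : IsClosed (A' : Set (H →L[ℂ] H)))
    (hKA : ∀ T : H →L[ℂ] H, IsCompactOperator T → T ∈ A)
    (hKA' : ∀ T : H →L[ℂ] H, IsCompactOperator T → T ∈ A')
    (Φ : A ≃⋆ₐ[ℂ] A') :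
    ∃ U : H →L[ℂ] H, U ∈ unitary (H →L[ℂ] H) ∧
      ∀ a : A, (Φ a : H →L[ℂ] H) = star U * (a : H →L[ℂ] H) * U :=
  stmt3_general A A' hKA hKA' Φ
end

section
/- Under the assumptions of the previous statement (P infinite-rank projection, K(ℓ²) ⊆ A ⊆ B(ℓ²), A − PAP compact for all A ∈ A), the map Ψ from A/K(ℓ²) to PAP/(PK(ℓ²)P) sending A + K(ℓ²) to PAP + PK(ℓ²)P is a well-defined *-isomorphism. -/
/-- under the assumptions of Statement 5, the map
`Ψ : A/K(ℓ²) → PAP/(PK(ℓ²)P)`, `a + K(ℓ²) ↦ PaP + PK(ℓ²)P`, is a well-defined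
*-isomorphism; expressed elementwise: two elements of `A` agree modulo the compacts iff
their compressions agree modulo `PK(ℓ²)P` (well-definedness and injectivity), the map is
multiplicative modulo the compact ideal, and it preserves the star operation.
(Surjectivity onto `PAP/(PK(ℓ²)P)` is immediate from the definition of the map.) -/
theorem stmt6 {H : Type*} [NormedAddCommGroup H] [InnerProductSpace ℂ H] [CompleteSpace H]
    (P : H →L[ℂ] H) (hPidem : IsIdempotentElem P) (hPsa : IsSelfAdjoint P)
    (hPrank : ¬ FiniteDimensional ℂ ↥(LinearMap.range (P : H →ₗ[ℂ] H)))
    (A : NonUnitalStarSubalgebra ℂ (H →L[ℂ] H))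
    (hAclosed : IsClosed (A : Set (H →L[ℂ] H)))
    (hKA : ∀ T : H →L[ℂ] H, IsCompactOperator T → T ∈ A)
    (hPAP : ∀ a ∈ A, IsCompactOperator (a - P * a * P)) :
    (∀ a ∈ A, ∀ b ∈ A,
        (IsCompactOperator (a - b) ↔ IsCompactOperator (P * a * P - P * b * P))) ∧
    (∀ a ∈ A, ∀ b ∈ A,
        IsCompactOperator (P * (a * b) * P - (P * a * P) * (P * b * P))) ∧
    (∀ a ∈ A, P * star a * P = star (P * a * P)) := by

  have hcomp : ∀ {T : H →L[ℂ] H}, IsCompactOperator T → ∀ S R : H →L[ℂ] H,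
      IsCompactOperator (S * T * R) := by
    intro T hT S R
    exact (hT.comp_clm R).clm_comp S
  refine ⟨?_, ?_, ?_⟩
  · intro a ha b hb
    have key : P * a * P - P * b * P = P * (a - b) * P := by noncomm_ring
    constructor
    · intro h
      rw [key]
      exact hcomp h P P
    · intro h
      have h1 : IsCompactOperator ((a - b) - P * (a - b) * P) := by
        have := hPAP (a - b) (sub_mem ha hb)
        exact this
      have := h1.add (key ▸ h)
      simpa using this
  · intro a ha b hb
    have key : P * (a * b) * P - (P * a * P) * (P * b * P)
        = P * (a * (b - P * b * P)) * P := by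
      have hP2 : P * P = P := hPidem
      have hPP : ∀ x : H →L[ℂ] H, P * (P * x) = P * x := fun x => by
        rw [← mul_assoc, hP2]
      noncomm_ring
      simp only [mul_assoc, hPP, hP2]
    rw [key]
    exact hcomp ((hPAP b hb).clm_comp a) P P
  · intro a ha
    rw [star_mul, star_mul, hPsa.star_eq]
    noncomm_ring
end
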